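/- For every positive integer n, Thompson's group T contains an element of order exactly n: there is a piecewise-linear homeomorphism of the circle ℝ/ℤ with all slopes integer powers of 2 and all breakpoints dyadic whose order in the group T is exactly n. -/

import Mathlib

open Set

/-- The group of self-homeomorphisms of a topological space,
with `(f * g) x = f (g x)`. -/
instance homeomorphGroup (X : Type*) [TopologicalSpace X] : Group (X ≃ₜ X) where
  mul f g := g.trans f
  one := Homeomorph.refl X
  inv := Homeomorph.symm
  mul_assoc _ _ _ := Homeomorph.ext fun _ => rfl
  one_mul _ := Homeomorph.ext fun _ => rfl
  mul_one _ := Homeomorph.ext fun _ => rfl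
  inv_mul_cancel a := Homeomorph.ext fun x => a.symm_apply_apply x

/-- A real number is a dyadic rational if it has the form `a / 2 ^ b`. -/
def IsDyadic (x : ℝ) : Prop := ∃ a : ℤ, ∃ b : ℕ, x = (a : ℝ) / 2 ^ b

/-- A point of the circle `ℝ/ℤ` is dyadic if it is the image of a dyadic rational. -/
def IsDyadicPt (x : AddCircle (1:ℝ)) : Prop :=
  ∃ r : ℝ, IsDyadic r ∧ (r : AddCircle (1:ℝ)) = x

/-- `F : ℝ → ℝ` is a lift of the circle map `f` if `F (x+1) = F x + 1` and the
reduction of `F` modulo 1 is `f`. -/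
def IsLiftOf (f : AddCircle (1:ℝ) ≃ₜ AddCircle (1:ℝ)) (F : ℝ → ℝ) : Prop :=
  (∀ x : ℝ, F (x + 1) = F x + 1) ∧
  ∀ x : ℝ, f (x : AddCircle (1:ℝ)) = ((F x : ℝ) : AddCircle (1:ℝ))

/-- A self-homeomorphism of the circle `ℝ/ℤ` belongs to Thompson's group `T` iff it maps
the set of dyadic points onto itself and has an increasing lift `F : ℝ → ℝ` that is
piecewise linear with respect to a finite dyadic partition `0 = t 0 < ⋯ < t m = 1`,
every slope being an integer power of `2` and every breakpoint `(t i, F (t i))`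
having dyadic rational coordinates. -/
def InThompsonT (f : AddCircle (1:ℝ) ≃ₜ AddCircle (1:ℝ)) : Prop :=
  (∀ x, IsDyadicPt x ↔ IsDyadicPt (f x)) ∧
  ∃ F : ℝ → ℝ, StrictMono F ∧ IsLiftOf f F ∧
    ∃ m : ℕ, ∃ t : Fin (m + 1) → ℝ,
      StrictMono t ∧ t 0 = 0 ∧ t (Fin.last m) = 1 ∧
      (∀ i, IsDyadic (t i) ∧ IsDyadic (F (t i))) ∧
      ∀ i : Fin m, ∃ k : ℤ, ∃ c : ℝ,
        ∀ x ∈ Icc (t i.castSucc) (t i.succ), F x = (2 : ℝ) ^ k * x + c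

/-! For `n = m + 2`, cut the circle into the dyadic intervals `[0, 1/2]`, `[1/2, 3/4]`, …,
`[1 - 2^-m, 1 - 2^-(m+1)]`, `[1 - 2^-(m+1), 1]` and map each one affinely onto the next, the last
one onto the first; the slopes are `1/2`, `1` and `2^m`. Its lift `F` satisfies
`F^[n] x = x + 1`: following the orbit of a point of `[0, 1/2]` through the pieces gives this on
`[0, 1/2] = [0, F 0]`, and the images of that interval under the `F^[k]`, which commute with
`F^[n]`, cover `[0, 1]`. Hence the map has order exactly `n`. It is affine on each interval of the
grid `2^-(m+1) ℤ`, and it preserves the dyadic points since `F` does and its inverse is one of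
its powers. -/

open Function Int
open scoped AddConstMap

namespace CircleDeg1Lift

lemma liftFun_leftRel (f : CircleDeg1Lift) :
    Relator.LiftFun (QuotientAddGroup.leftRel (AddSubgroup.zmultiples (1:ℝ))).r
      (QuotientAddGroup.leftRel (AddSubgroup.zmultiples (1:ℝ))).r f f := by
  intro x y hxy
  rw [QuotientAddGroup.leftRel_apply, AddSubgroup.mem_zmultiples_iff] at hxy ⊢
  obtain ⟨j, hj⟩ := hxy
  rw [zsmul_one] at hj
  refine ⟨j, ?_⟩
  rw [zsmul_one, show y = x + j by linarith, map_add_int]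
  ring

def toCircleHomeomorph : CircleDeg1Liftˣ →* (AddCircle (1:ℝ) ≃ₜ AddCircle (1:ℝ)) where
  toFun f :=
    { toFun := Quotient.map' f (liftFun_leftRel f)
      invFun := Quotient.map' ↑f⁻¹ (liftFun_leftRel ↑f⁻¹)
      left_inv z := by
        induction z using QuotientAddGroup.induction_on
        exact congrArg _ (units_inv_apply_apply f _)
      right_inv z := by
        induction z using QuotientAddGroup.induction_on
        exact congrArg _ (units_apply_inv_apply f _)
      continuous_toFun := (toOrderIso f).continuous.quotient_map' _
      continuous_invFun := (toOrderIso f⁻¹).continuous.quotient_map' _ }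
  map_one' := Homeomorph.ext fun z => by induction z using QuotientAddGroup.induction_on; rfl
  map_mul' _ _ := Homeomorph.ext fun z => by
    induction z using QuotientAddGroup.induction_on; rfl

@[simp]
lemma toCircleHomeomorph_apply_coe (f : CircleDeg1Liftˣ) (x : ℝ) :
    toCircleHomeomorph f x = ((f x : ℝ) : AddCircle (1:ℝ)) := rfl

lemma isLiftOf_toCircleHomeomorph (f : CircleDeg1Liftˣ) :
    IsLiftOf (toCircleHomeomorph f) f :=
  ⟨(f : CircleDeg1Lift).map_add_one, fun _ => rfl⟩

lemma toCircleHomeomorph_pow_apply_coe (f : CircleDeg1Liftˣ) (k : ℕ) (x : ℝ) :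
    (toCircleHomeomorph f ^ k) x = (((f : CircleDeg1Lift)^[k] x : ℝ) : AddCircle (1:ℝ)) := by
  rw [← map_pow, toCircleHomeomorph_apply_coe, Units.val_pow_eq_pow_val, coe_pow]

/-- The order `d` divides `n`, and `f^[d] 0` is an integer `j` with `(n / d) * j = 1`. -/
theorem orderOf_toCircleHomeomorph {f : CircleDeg1Liftˣ} {n : ℕ}
    (h : ∀ x, (f : CircleDeg1Lift)^[n] x = x + 1) : orderOf (toCircleHomeomorph f) = n := by
  have hpow : toCircleHomeomorph f ^ n = 1 := Homeomorph.ext fun z => by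
    induction z using QuotientAddGroup.induction_on with
    | H x => rw [toCircleHomeomorph_pow_apply_coe, h]; exact AddCircle.coe_add_period 1 x
  obtain ⟨q, hq⟩ := orderOf_dvd_of_pow_eq_one hpow
  set d := orderOf (toCircleHomeomorph f)
  obtain ⟨j, hj⟩ : ∃ j : ℤ, ((f : CircleDeg1Lift) ^ d) 0 = 0 + j := by
    have h0 : (toCircleHomeomorph f ^ d) ((0:ℝ) : AddCircle (1:ℝ)) = 0 := by
      rw [pow_orderOf_eq_one]; rfl
    rw [toCircleHomeomorph_pow_apply_coe] at h0
    obtain ⟨j, hj⟩ := (AddCircle.coe_eq_zero_iff _).mp h0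
    exact ⟨j, by rw [coe_pow, ← hj, zsmul_one, zero_add]⟩
  have hqj : ((q * j : ℤ) : ℝ) = 1 := by
    have := iterate_eq_of_map_eq_add_int _ hj q
    rw [coe_pow, ← iterate_mul, ← hq, h] at this
    push_cast; linarith
  have : q = 1 := by
    have := Int.eq_one_of_mul_eq_one_right (Int.natCast_nonneg q) (by exact_mod_cast hqj)
    omega
  rw [hq, this, mul_one]

/-- The images of `[a, f a]` under `f^[k]`, `k < n`, cover `[a, a + 1]`, and `f^[n]` commutes
with each `f^[k]`. -/
theorem iterate_eq_add_one_of_forall_mem_Icc (f : CircleDeg1Lift) (hf : Continuous f) {a : ℝ}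
    {n : ℕ} (ha : a ≤ f a) (h : ∀ x ∈ Icc a (f a), f^[n] x = x + 1) (y : ℝ) :
    f^[n] y = y + 1 := by
  have hIco : ∀ y ∈ Ico a (a + 1), f^[n] y = y + 1 := by
    intro y hy
    rw [← h a ⟨le_rfl, ha⟩] at hy
    obtain ⟨k, -, hyk⟩ := mem_iUnion₂.mp (Ico_subset_biUnion_Ico n (fun k => f^[k] a) hy)
    rw [iterate_succ_apply] at hyk
    obtain ⟨x, hx, rfl⟩ :=
      intermediate_value_Icc ha (hf.iterate k).continuousOn (Ico_subset_Icc_self hyk)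
    rw [← iterate_add_apply, add_comm, iterate_add_apply, h x hx, ← coe_pow, map_add_one]
  have hy : a + fract (y - a) ∈ Ico a (a + 1) :=
    ⟨le_add_of_nonneg_right (fract_nonneg _), by linarith [fract_lt_one (y - a)]⟩
  have hsplit : y = a + fract (y - a) + ⌊y - a⌋ := by rw [fract]; ring
  rw [hsplit, ← coe_pow, map_add_int, coe_pow, hIco _ hy]
  ring

section ofIcc

variable {g : ℝ → ℝ}

lemma eqOn_add_fract_sub (h1 : g 1 = g 0 + 1) :
    EqOn (fun x => x + (g (fract x) - fract x)) g (Icc 0 1) := by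
  rintro x ⟨hx0, hx1⟩
  rcases hx1.lt_or_eq with hx1 | rfl
  · simp only [fract_eq_self.mpr ⟨hx0, hx1⟩]; ring
  · simp only [fract_one, h1]; ring

lemma strictMono_add_fract_sub (hg : StrictMonoOn g (Icc 0 1)) (h1 : g 1 = g 0 + 1) :
    StrictMono fun x => x + (g (fract x) - fract x) := by
  let F : ℝ →+c[(1:ℝ), (1:ℝ)] ℝ :=
    ⟨fun x => x + (g (fract x) - fract x), fun x => by simp only [fract_add_one]; ring⟩
  refine (AddConstMapClass.strictMono_iff_Icc (f := F) one_pos 0).2 ?_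
  rw [zero_add]
  exact hg.congr (eqOn_add_fract_sub h1).symm

/-- This is `⌊x⌋ + g (fract x)`, written so that its continuity only asks `t ↦ g t - t` to take
the same value at `0` and `1`. -/
noncomputable def ofIcc (g : ℝ → ℝ) (hg : StrictMonoOn g (Icc 0 1)) (h1 : g 1 = g 0 + 1) :
    CircleDeg1Lift where
  toFun x := x + (g (fract x) - fract x)
  monotone' := (strictMono_add_fract_sub hg h1).monotone
  map_add_one' x := by simp only [fract_add_one]; ring

variable (hg : StrictMonoOn g (Icc 0 1)) (h1 : g 1 = g 0 + 1)

lemma ofIcc_apply_of_mem_Icc {x : ℝ} (hx : x ∈ Icc 0 1) : ofIcc g hg h1 x = g x :=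
  eqOn_add_fract_sub h1 hx

lemma strictMono_ofIcc : StrictMono (ofIcc g hg h1) := strictMono_add_fract_sub hg h1

lemma continuous_ofIcc (hgc : ContinuousOn g (Icc 0 1)) : Continuous (ofIcc g hg h1) := by
  have : Continuous ((fun t => g t - t) ∘ fract) :=
    (hgc.sub continuousOn_id).comp_fract'' (by simp [h1])
  exact continuous_id.add this

lemma isUnit_ofIcc (hgc : ContinuousOn g (Icc 0 1)) : IsUnit (ofIcc g hg h1) :=
  isUnit_iff_bijective.2 ⟨(strictMono_ofIcc hg h1).injective,
    (continuous_iff_surjective _).1 (continuous_ofIcc hg h1 hgc)⟩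

end ofIcc

end CircleDeg1Lift

/-- The inverse of `f` is one of its powers. -/
lemma Homeomorph.apply_iff_of_isOfFinOrder {X : Type*} [TopologicalSpace X] {f : X ≃ₜ X}
    (hf : IsOfFinOrder f) {P : X → Prop} (hP : ∀ x, P x → P (f x)) (x : X) :
    P x ↔ P (f x) := by
  refine ⟨hP x, fun hfx => ?_⟩
  obtain ⟨n, hn, hfn⟩ := hf.exists_pow_eq_one
  have hpow : ∀ k y, P y → P ((f ^ k) y) := by
    intro k
    induction k with
    | zero => exact fun y hy => hy
    | succ k ih => exact fun y hy => by rw [pow_succ']; exact hP _ (ih y hy)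
  have hx : (f ^ (n - 1)) (f x) = x := by
    change (f ^ (n - 1) * f) x = x
    rw [pow_sub_one_mul hn.ne', hfn]
    rfl
  exact hx ▸ hpow (n - 1) _ hfx

def dyadicSubring : Subring ℝ where
  carrier := {x | IsDyadic x}
  mul_mem' := by
    rintro _ _ ⟨a, b, rfl⟩ ⟨c, d, rfl⟩
    exact ⟨a * c, b + d, by push_cast; ring⟩
  one_mem' := ⟨1, 0, by norm_num⟩
  add_mem' := by
    rintro _ _ ⟨a, b, rfl⟩ ⟨c, d, rfl⟩
    exact ⟨a * 2 ^ d + c * 2 ^ b, b + d, by push_cast; field_simp; ring⟩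
  zero_mem' := ⟨0, 0, by norm_num⟩
  neg_mem' := by
    rintro _ ⟨a, b, rfl⟩
    exact ⟨-a, b, by push_cast; ring⟩

lemma mem_dyadicSubring {x : ℝ} : x ∈ dyadicSubring ↔ IsDyadic x := Iff.rfl

lemma isDyadic_inv_two_pow (k : ℕ) : IsDyadic ((2:ℝ) ^ k)⁻¹ := ⟨1, k, by simp⟩

lemma CircleDeg1Lift.isDyadic_ofIcc {g : ℝ → ℝ} (hg : StrictMonoOn g (Icc 0 1))
    (h1 : g 1 = g 0 + 1) (hgd : ∀ t, IsDyadic t → IsDyadic (g t)) {x : ℝ} (hx : IsDyadic x) :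
    IsDyadic (CircleDeg1Lift.ofIcc g hg h1 x) := by
  have hfract : IsDyadic (fract x) :=
    sub_mem (mem_dyadicSubring.2 hx) (intCast_mem dyadicSubring _)
  exact add_mem (mem_dyadicSubring.2 hx) (sub_mem (mem_dyadicSubring.2 (hgd _ hfract)) hfract)

lemma IsDyadicPt.apply_of_isLiftOf {f : AddCircle (1:ℝ) ≃ₜ AddCircle (1:ℝ)} {F : ℝ → ℝ}
    (hlift : IsLiftOf f F) (hFd : ∀ x, IsDyadic x → IsDyadic (F x)) {x : AddCircle (1:ℝ)}
    (hx : IsDyadicPt x) : IsDyadicPt (f x) := by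
  obtain ⟨r, hr, rfl⟩ := hx
  exact ⟨F r, hFd r hr, (hlift.2 r).symm⟩

theorem inThompsonT_of_affine_on_grid {f : AddCircle (1:ℝ) ≃ₜ AddCircle (1:ℝ)} {F : ℝ → ℝ}
    (hf : ∀ x, IsDyadicPt x ↔ IsDyadicPt (f x)) (hF : StrictMono F) (hlift : IsLiftOf f F)
    (hFd : ∀ x, IsDyadic x → IsDyadic (F x)) (N : ℕ)
    (haff : ∀ i : ℕ, i < 2 ^ N → ∃ k : ℤ, ∃ c : ℝ,
      ∀ x ∈ Icc ((i : ℝ) / 2 ^ N) ((i + 1) / 2 ^ N), F x = 2 ^ k * x + c) :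
    InThompsonT f := by
  have hgrid : ∀ i : Fin (2 ^ N + 1), IsDyadic ((i : ℝ) / 2 ^ N) :=
    fun i => ⟨i, N, by push_cast; rfl⟩
  refine ⟨hf, F, hF, hlift, 2 ^ N, fun i => (i : ℝ) / 2 ^ N, ?_, by simp, by simp,
    fun i => ⟨hgrid i, hFd _ (hgrid i)⟩, fun i => ?_⟩
  · intro i j hij
    exact div_lt_div_of_pos_right (by exact_mod_cast hij) (by positivity)
  · obtain ⟨k, c, h⟩ := haff i i.2
    exact ⟨k, c, by simpa using h⟩

namespace ThompsonT

variable (m : ℕ)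

noncomputable def gap : ℝ := (2 ^ (m + 1))⁻¹

lemma gap_pos : 0 < gap m := by unfold gap; positivity

lemma two_pow_mul_gap : 2 ^ m * gap m = 1 / 2 := by
  unfold gap; rw [pow_succ]; field_simp

lemma two_mul_gap : 2 * gap m = 1 / 2 ^ m := by
  unfold gap; rw [pow_succ]; field_simp

lemma gap_le_half : gap m ≤ 1 / 2 := by
  nlinarith [two_pow_mul_gap m, gap_pos m, one_le_pow₀ (M₀ := ℝ) (a := 2) one_le_two (n := m)]

/-- On `[0, 1]` the maximum is attained by the slope `1/2` line on `[0, 1 - 2 * gap m]`, by the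
slope `1` line on `[1 - 2 * gap m, 1 - gap m]` and by the slope `2 ^ m` line on `[1 - gap m, 1]`,
which it maps onto `[1/2, 1 - gap m]`, `[1 - gap m, 1]` and `[1, 3/2]`. -/
noncomputable def cyclicPL (t : ℝ) : ℝ :=
  max (max ((t + 1) / 2) (t + gap m)) (2 ^ m * (t - 1) + 3 / 2)

variable {m}

lemma cyclicPL_of_le {t : ℝ} (ht : t ≤ 1 - 2 * gap m) : cyclicPL m t = (t + 1) / 2 := by
  have hq : (1:ℝ) ≤ 2 ^ m := one_le_pow₀ one_le_two
  have h1 : t + gap m ≤ (t + 1) / 2 := by linarith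
  have h2 : 2 ^ m * (t - 1) + 3 / 2 ≤ (t + 1) / 2 := by
    nlinarith [two_pow_mul_gap m, mul_nonneg (by linarith : (0:ℝ) ≤ 2 ^ m - 1 / 2)
      (by linarith : 0 ≤ 1 - 2 * gap m - t)]
  rw [cyclicPL, max_eq_left h1, max_eq_left h2]

lemma cyclicPL_of_mem_Icc {t : ℝ} (ht : t ∈ Icc (1 - 2 * gap m) (1 - gap m)) :
    cyclicPL m t = t + gap m := by
  have hq : (1:ℝ) ≤ 2 ^ m := one_le_pow₀ one_le_two
  have h1 : (t + 1) / 2 ≤ t + gap m := by linarith [ht.1]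
  have h2 : 2 ^ m * (t - 1) + 3 / 2 ≤ t + gap m := by
    nlinarith [two_pow_mul_gap m, mul_nonneg (by linarith : (0:ℝ) ≤ 2 ^ m - 1)
      (by linarith [ht.2] : 0 ≤ 1 - gap m - t)]
  rw [cyclicPL, max_eq_right h1, max_eq_left h2]

lemma cyclicPL_of_ge {t : ℝ} (ht : 1 - gap m ≤ t) : cyclicPL m t = 2 ^ m * (t - 1) + 3 / 2 := by
  have hq : (1:ℝ) ≤ 2 ^ m := one_le_pow₀ one_le_two
  have h1 : (t + 1) / 2 ≤ 2 ^ m * (t - 1) + 3 / 2 := by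
    nlinarith [two_pow_mul_gap m, gap_le_half m, mul_nonneg (by linarith : (0:ℝ) ≤ 2 ^ m - 1 / 2)
      (by linarith : 0 ≤ t - 1 + gap m)]
  have h2 : t + gap m ≤ 2 ^ m * (t - 1) + 3 / 2 := by
    nlinarith [two_pow_mul_gap m, mul_nonneg (by linarith : (0:ℝ) ≤ 2 ^ m - 1)
      (by linarith : 0 ≤ t - 1 + gap m)]
  rw [cyclicPL, max_eq_right (max_le h1 h2)]

variable (m)

lemma strictMono_cyclicPL : StrictMono (cyclicPL m) := fun a b hab =>
  max_lt_max (max_lt_max (by linarith) (by linarith))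
    (by have : (0:ℝ) < 2 ^ m := by positivity
        nlinarith)

lemma continuous_cyclicPL : Continuous (cyclicPL m) := by unfold cyclicPL; fun_prop

lemma cyclicPL_one : cyclicPL m 1 = cyclicPL m 0 + 1 := by
  rw [cyclicPL_of_ge (by linarith [gap_pos m]),
    cyclicPL_of_le (by linarith [gap_le_half m])]
  norm_num

lemma isDyadic_cyclicPL {t : ℝ} (ht : IsDyadic t) : IsDyadic (cyclicPL m t) := by
  have h2 : IsDyadic 2⁻¹ := by simpa using isDyadic_inv_two_pow 1
  have hgap : IsDyadic (gap m) := isDyadic_inv_two_pow (m + 1)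
  rw [← mem_dyadicSubring] at *
  refine max_rec' _ (max_rec' _ ?_ ?_) ?_
  · rw [div_eq_mul_inv]; exact mul_mem (add_mem ht (one_mem _)) h2
  · exact add_mem ht hgap
  · rw [show (3 / 2 : ℝ) = 3 * 2⁻¹ by norm_num]
    exact add_mem (mul_mem (pow_mem (ofNat_mem _ 2) m) (sub_mem ht (one_mem _)))
      (mul_mem (ofNat_mem _ 3) h2)

noncomputable def cyclicLift : CircleDeg1Lift :=
  CircleDeg1Lift.ofIcc (cyclicPL m) ((strictMono_cyclicPL m).strictMonoOn _) (cyclicPL_one m)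

variable {m}

lemma cyclicLift_apply {x : ℝ} (hx : x ∈ Icc 0 1) : cyclicLift m x = cyclicPL m x :=
  CircleDeg1Lift.ofIcc_apply_of_mem_Icc _ _ hx

lemma iterate_cyclicLift_of_le {k : ℕ} (hk : k ≤ m) {x : ℝ} (hx : x ∈ Icc 0 (1 / 2)) :
    (cyclicLift m)^[k] x = 1 - (1 - x) / 2 ^ k := by
  induction k with
  | zero => simp
  | succ k ih =>
    have hpow : (2:ℝ) ^ (k + 1) ≤ 2 ^ m := pow_le_pow_right₀ one_le_two hk
    have h2gap := two_mul_gap m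
    have hk1 : (1:ℝ) ≤ 2 ^ k := one_le_pow₀ one_le_two
    have hle : 1 / 2 ^ m ≤ (1 - x) / 2 ^ k := by
      rw [div_le_div_iff₀ (by positivity) (by positivity)]
      nlinarith [hx.2, pow_succ (2:ℝ) k]
    have hle1 : (1 - x) / 2 ^ k ≤ 1 := by
      rw [div_le_one (by positivity)]; linarith [hx.1]
    have hnonneg : 0 ≤ (1 - x) / 2 ^ k := div_nonneg (by linarith [hx.2]) (by positivity)
    rw [iterate_succ_apply', ih (by omega),
      cyclicLift_apply ⟨by linarith, by linarith⟩, cyclicPL_of_le (by linarith), pow_succ]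
    field_simp
    ring

/-- The orbit of `x` goes `m` times through the slope `1/2` piece, then through the other two. -/
lemma iterate_cyclicLift_eq_add_one_of_mem_Icc {x : ℝ} (hx : x ∈ Icc 0 (1 / 2)) :
    (cyclicLift m)^[m + 2] x = x + 1 := by
  have hgap := gap_pos m
  have hu : (1 - x) * (2 * gap m) ∈ Icc (gap m) (2 * gap m) :=
    ⟨by nlinarith [hx.2], by nlinarith [hx.1]⟩
  have hm1 : (cyclicLift m)^[m + 1] x = 1 + (2 * x - 1) * gap m := by
    rw [iterate_succ_apply', iterate_cyclicLift_of_le le_rfl hx, div_eq_mul_one_div, ← two_mul_gap,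
      cyclicLift_apply ⟨by linarith [hu.2, gap_le_half m], by linarith [hu.1]⟩,
      cyclicPL_of_mem_Icc ⟨by linarith [hu.2], by linarith [hu.1]⟩]
    ring
  have hv : (2 * x - 1) * gap m ∈ Icc (-gap m) 0 :=
    ⟨by nlinarith [hx.1], by nlinarith [hx.2]⟩
  rw [iterate_succ_apply', hm1, cyclicLift_apply ⟨by linarith [hv.1, gap_le_half m],
      by linarith [hv.2]⟩, cyclicPL_of_ge (by linarith [hv.1])]
  linear_combination (2 * x - 1) * two_pow_mul_gap m

lemma cyclicLift_zero : cyclicLift m 0 = 1 / 2 := by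
  rw [cyclicLift_apply ⟨le_rfl, zero_le_one⟩, cyclicPL_of_le (by linarith [gap_le_half m])]
  norm_num

variable (m)

lemma continuous_cyclicLift : Continuous (cyclicLift m) :=
  CircleDeg1Lift.continuous_ofIcc _ _ (continuous_cyclicPL m).continuousOn

lemma iterate_cyclicLift_eq_add_one (x : ℝ) : (cyclicLift m)^[m + 2] x = x + 1 :=
  (cyclicLift m).iterate_eq_add_one_of_forall_mem_Icc (continuous_cyclicLift m)
    (by rw [cyclicLift_zero]; norm_num)
    (fun _ hx => iterate_cyclicLift_eq_add_one_of_mem_Icc (cyclicLift_zero (m := m) ▸ hx)) x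

lemma isUnit_cyclicLift : IsUnit (cyclicLift m) :=
  CircleDeg1Lift.isUnit_ofIcc _ _ (continuous_cyclicPL m).continuousOn

/-- It cyclically permutes the `m + 2` intervals `[0, 1/2]`, `[1/2, 3/4]`, …,
`[1 - 2 * gap m, 1 - gap m]`, `[1 - gap m, 1]`. -/
noncomputable def cyclicElement : AddCircle (1:ℝ) ≃ₜ AddCircle (1:ℝ) :=
  CircleDeg1Lift.toCircleHomeomorph (isUnit_cyclicLift m).unit

lemma orderOf_cyclicElement : orderOf (cyclicElement m) = m + 2 :=
  CircleDeg1Lift.orderOf_toCircleHomeomorph (iterate_cyclicLift_eq_add_one m)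

lemma exists_affine_cyclicLift {i : ℕ} (hi : i < 2 ^ (m + 1)) :
    ∃ k : ℤ, ∃ c : ℝ, ∀ x ∈ Icc ((i : ℝ) / 2 ^ (m + 1)) ((i + 1) / 2 ^ (m + 1)),
      cyclicLift m x = 2 ^ k * x + c := by
  have hgap : (2:ℝ) ^ (m + 1) * gap m = 1 := mul_inv_cancel₀ (by positivity)
  have hpos := gap_pos m
  have hdiv : ∀ r : ℝ, r / 2 ^ (m + 1) = r * gap m := fun r => div_eq_mul_inv _ _
  simp only [hdiv]
  obtain h | h | h : i + 3 ≤ 2 ^ (m + 1) ∨ i + 2 = 2 ^ (m + 1) ∨ i + 1 = 2 ^ (m + 1) := by omega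
  · have h' : (i + 3 : ℝ) ≤ 2 ^ (m + 1) := by exact_mod_cast h
    refine ⟨-1, 1 / 2, fun x hx => ?_⟩
    have hx1 : x ≤ 1 - 2 * gap m := by nlinarith [hx.2]
    rw [cyclicLift_apply ⟨by nlinarith [hx.1], by linarith⟩, cyclicPL_of_le hx1, zpow_neg_one]
    ring
  · have h' : (i + 2 : ℝ) = 2 ^ (m + 1) := by exact_mod_cast h
    refine ⟨0, gap m, fun x hx => ?_⟩
    have hx' : x ∈ Icc (1 - 2 * gap m) (1 - gap m) := ⟨by nlinarith [hx.1], by nlinarith [hx.2]⟩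
    rw [cyclicLift_apply ⟨by linarith [hx'.1, gap_le_half m], by linarith [hx'.2]⟩,
      cyclicPL_of_mem_Icc hx', zpow_zero, one_mul]
  · have h' : (i + 1 : ℝ) = 2 ^ (m + 1) := by exact_mod_cast h
    refine ⟨m, 3 / 2 - 2 ^ m, fun x hx => ?_⟩
    have hx' : x ∈ Icc (1 - gap m) 1 := ⟨by nlinarith [hx.1], by nlinarith [hx.2]⟩
    rw [cyclicLift_apply ⟨by linarith [hx'.1, gap_le_half m], hx'.2⟩, cyclicPL_of_ge hx'.1,
      zpow_natCast]
    ring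

lemma inThompsonT_cyclicElement : InThompsonT (cyclicElement m) := by
  have hlift : IsLiftOf (cyclicElement m) (cyclicLift m) := by
    have := CircleDeg1Lift.isLiftOf_toCircleHomeomorph (isUnit_cyclicLift m).unit
    rwa [IsUnit.unit_spec] at this
  have hFd : ∀ x, IsDyadic x → IsDyadic (cyclicLift m x) :=
    fun _ => CircleDeg1Lift.isDyadic_ofIcc _ _ (fun _ => isDyadic_cyclicPL m)
  have hfin : IsOfFinOrder (cyclicElement m) :=
    orderOf_pos_iff.1 (by rw [orderOf_cyclicElement]; omega)
  exact inThompsonT_of_affine_on_grid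
    (Homeomorph.apply_iff_of_isOfFinOrder hfin fun _ => IsDyadicPt.apply_of_isLiftOf hlift hFd)
    (CircleDeg1Lift.strictMono_ofIcc _ _) hlift hFd (m + 1) fun _ => exists_affine_cyclicLift m

end ThompsonT

lemma inThompsonT_one : InThompsonT 1 :=
  inThompsonT_of_affine_on_grid (fun _ => Iff.rfl) strictMono_id ⟨fun _ => rfl, fun _ => rfl⟩
    (fun _ h => h) 0 fun _ _ => ⟨0, 0, fun x _ => by simp⟩

/-- For every positive integer `n`, Thompson's group `T` contains an element of order
exactly `n`: a piecewise-linear homeomorphism of the circle `ℝ/ℤ` with all slopes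
integer powers of `2` and all breakpoints dyadic whose order is exactly `n`. -/
theorem thompsonT_element_of_order :
    ∀ n : ℕ, 0 < n →
      ∃ f : AddCircle (1:ℝ) ≃ₜ AddCircle (1:ℝ), InThompsonT f ∧ orderOf f = n := by
  intro n hn
  obtain ⟨m, rfl⟩ | rfl : (∃ m, n = m + 2) ∨ n = 1 := by
    rcases n with _ | _ | m <;> simp_all
  · exact ⟨ThompsonT.cyclicElement m, ThompsonT.inThompsonT_cyclicElement m,
      ThompsonT.orderOf_cyclicElement m⟩
  · exact ⟨1, inThompsonT_one, orderOf_one⟩
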